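/- (Proposition 3) Let Γ be a finite nonempty set, Δ : Γ → Γ → ℤ a matrix with det Δ ≠ 0, ∂Γ ⊆ Γ and Γ° = Γ \ ∂Γ. Then the sequence 0 → H_ℤ(Γ) → ℤ^{∂Γ} → G(Γ) → coker Δ° → 0 is exact, where: the first map sends an integer-valued harmonic function h to the restriction of Δh to ∂Γ; the second map sends g ∈ ℤ^{∂Γ} to the class in G(Γ) = ℤ^Γ/Δ(ℤ^Γ) of its extension by zero to Γ; the third map sends the class of f ∈ ℤ^Γ to the class of f|_{Γ°} in coker Δ° = ℤ^{Γ°}/Δ°(ℤ^Γ). Explicitly: the first map is injective, the image of each map equals the kernel of the next, and the last map is surjective. -/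
import Mathlib


open scoped BigOperators

/-- `f : Γ → ℤ` is harmonic: `(Δf)(v) = 0` for all interior `v` (i.e. `v ∉ ∂Γ = B`). -/
def HarmInt {Γ : Type} [Fintype Γ] (Δ : Matrix Γ Γ ℤ) (B : Set Γ) (f : Γ → ℤ) : Prop :=
  ∀ v ∉ B, ∑ w, Δ v w * f w = 0

open Classical in
/-- Extension by zero of a function on the boundary `B = ∂Γ` to all of `Γ`. -/
noncomputable def extZero {Γ : Type} (B : Set Γ) (g : {v : Γ // v ∈ B} → ℤ) : Γ → ℤ :=
  fun v => if hv : v ∈ B then g ⟨v, hv⟩ else 0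

/-- Proposition 3: exactness of `0 → H_ℤ(Γ) → ℤ^{∂Γ} → G(Γ) → coker Δ° → 0`,
stated elementwise.  The first map sends a harmonic `h` to `(Δh)|_{∂Γ}`, the second
sends `g` to the class of its extension by zero in `G(Γ) = ℤ^Γ/Δ(ℤ^Γ)`, and the
third sends the class of `f` to the class of `f|_{Γ°}` in `coker Δ° = ℤ^{Γ°}/Δ°(ℤ^Γ)`. -/
lemma key_inj {Γ : Type} [Fintype Γ] [DecidableEq Γ] (Δ : Matrix Γ Γ ℤ)
    (hΔ : Δ.det ≠ 0) (x : Γ → ℤ) (hx : ∀ v, ∑ w, Δ v w * x w = 0) : x = 0 := by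
  have hdet : ((Δ.map (Int.cast : ℤ → ℚ)).det) ≠ 0 := by
    rw [show (Int.cast : ℤ → ℚ) = ⇑(Int.castRingHom ℚ) from rfl,
      ← RingHom.mapMatrix_apply, ← RingHom.map_det]
    simpa using hΔ
  have hinj := Matrix.mulVec_injective_iff_isUnit.2 (Matrix.isUnit_iff_isUnit_det _ |>.2 hdet.isUnit)
  have h0 : (Δ.map (Int.cast : ℤ → ℚ)).mulVec (fun v => (x v : ℚ)) = 0 := by
    funext v
    simp only [Matrix.mulVec, dotProduct, Matrix.map_apply, Pi.zero_apply]
    exact_mod_cast congrArg (Int.cast : ℤ → ℚ) (hx v)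
  have := hinj (h0.trans (Matrix.mulVec_zero _).symm)
  funext v
  have h2 := congrFun this v
  simp only [Pi.zero_apply] at h2 ⊢
  exact_mod_cast h2

theorem exact_sequence_boundary_sandpile_coker
    (Γ : Type) [Fintype Γ] [DecidableEq Γ] [Nonempty Γ]
    (Δ : Matrix Γ Γ ℤ) (B : Set Γ) (hΔ : Δ.det ≠ 0) :
    -- the first map is injective
    (∀ h₁ h₂ : Γ → ℤ, HarmInt Δ B h₁ → HarmInt Δ B h₂ →
      (fun v : {v : Γ // v ∈ B} => ∑ w, Δ v.1 w * h₁ w) =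
        (fun v : {v : Γ // v ∈ B} => ∑ w, Δ v.1 w * h₂ w) → h₁ = h₂) ∧
    -- exactness at `ℤ^{∂Γ}`: the class of `extZero B g` vanishes in `G(Γ)`
    -- iff `g` is the boundary restriction of `Δh` for some harmonic `h`
    (∀ g : {v : Γ // v ∈ B} → ℤ,
      ((∃ u : Γ → ℤ, extZero B g = fun v => ∑ w, Δ v w * u w) ↔
        ∃ h : Γ → ℤ, HarmInt Δ B h ∧ g = fun v => ∑ w, Δ v.1 w * h w)) ∧
    -- exactness at `G(Γ)`: the class of `f|_{Γ°}` vanishes in `coker Δ°`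
    -- iff the class of `f` in `G(Γ)` comes from the boundary
    (∀ f : Γ → ℤ,
      ((∃ u : Γ → ℤ, ∀ v ∉ B, f v = ∑ w, Δ v w * u w) ↔
        ∃ g : {v : Γ // v ∈ B} → ℤ, ∃ u : Γ → ℤ,
          f = extZero B g + fun v => ∑ w, Δ v w * u w)) ∧
    -- the last map is surjective onto `coker Δ°`
    (∀ h : {v : Γ // v ∉ B} → ℤ, ∃ f u : Γ → ℤ, ∀ v (hv : v ∉ B),
      f v = h ⟨v, hv⟩ + ∑ w, Δ v w * u w) := by
  refine ⟨?_, ?_, ?_, ?_⟩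
  · intro h₁ h₂ hh₁ hh₂ heq
    have hz : (fun w => h₁ w - h₂ w) = 0 := by
      apply key_inj Δ hΔ
      intro v
      have : ∑ w, Δ v w * (h₁ w - h₂ w) = (∑ w, Δ v w * h₁ w) - ∑ w, Δ v w * h₂ w := by
        rw [← Finset.sum_sub_distrib]; congr 1; ext w; ring
      rw [this]
      by_cases hv : v ∈ B
      · have := congrFun heq ⟨v, hv⟩
        simp only at this
        omega
      · rw [hh₁ v hv, hh₂ v hv]; ring
    funext v
    have := congrFun hz v
    simp only [Pi.zero_apply] at this
    omega
  · intro g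
    constructor
    · rintro ⟨u, hu⟩
      refine ⟨u, ?_, ?_⟩
      · intro v hv
        have := congrFun hu v
        simp [extZero, hv] at this
        omega
      · funext v
        have := congrFun hu v.1
        simp [extZero, v.2] at this
        omega
    · rintro ⟨h, hh, hg⟩
      refine ⟨h, ?_⟩
      funext v
      by_cases hv : v ∈ B
      · simp [extZero, hv, hg]
      · simp [extZero, hv, hh v hv]
  · intro f
    constructor
    · rintro ⟨u, hu⟩
      classical
      refine ⟨fun v => f v.1 - ∑ w, Δ v.1 w * u w, u, ?_⟩
      funext v
      by_cases hv : v ∈ B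
      · simp [extZero, hv]
      · simp [extZero, hv, ← hu v hv]
    · rintro ⟨g, u, hf⟩
      refine ⟨u, fun v hv => ?_⟩
      have := congrFun hf v
      simp [extZero, hv] at this
      omega
  · intro h
    classical
    refine ⟨fun v => if hv : v ∉ B then h ⟨v, hv⟩ else 0, 0, fun v hv => ?_⟩
    simp [hv]
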